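/- For every k ≥ 1 consider the constructor TRS R_k over the constructors s (unary) and 0 (constant) and the single k-ary defined symbol f_k (all argument positions normal), with the k rules f_k(s(x1),x2,...,xk) → f_k(x1,x2,...,xk); f_k(0,s(x2),x3,...,xk) → f_k(x2,x2,x3,...,xk); ...; f_k(0,...,0,s(xk)) → f_k(xk,...,xk,xk). Then R_k is compatible with a polynomial path order ⊐pop* (hence predicative recursive), and there is a rational constant c_k > 0 such that for all n ≥ 1 the term f_k(s^n(0),...,s^n(0)) rewrites to f_k(0,...,0) in at least c_k·n^k steps; consequently the innermost runtime complexity of R_k satisfies rc(n) = Ω(n^k). -/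

import Mathlib

/-! # Preamble: term rewriting, polynomial path orders, predicative interpretations

Formalization of the setting of Avanzini & Moser, "Polynomial Path Orders".
Terms are modelled with explicit variables indexed by `ℕ` and a signature `F`;
arities (`ar`), the partitioning into defined symbols and constructors
(`isDef`), the safe mapping (`safe`, value `true` meaning "safe position",
0-based) and the precedence (a preorder `ge`) are explicit parameters.
Multiset comparisons inside inductively defined orders are stated in
Skolemized form (the witnessing decompositions are constructor arguments). -/

set_option maxHeartbeats 1000000

namespace PPO

/-- First-order terms over a signature `F` (arities are tracked separately),
with variables indexed by `ℕ`. -/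
inductive Tm (F : Type) : Type
  | var : ℕ → Tm F
  | app : F → List (Tm F) → Tm F

namespace Tm
variable {F : Type}

/-- The size `|t|` of a term: number of occurrences of variables and function symbols. -/
def size : Tm F → ℕ
  | .var _ => 1
  | .app _ ts => 1 + (ts.attach.map (fun t => size t.1)).sum
decreasing_by
  simp only [Tm.app.sizeOf_spec]; have := List.sizeOf_lt_of_mem t.2; omega

/-- The depth `dp(t)` of a term. -/
def depth : Tm F → ℕ
  | .var _ => 1
  | .app _ ts => 1 + (ts.attach.map (fun t => depth t.1)).foldr max 0
decreasing_by
  simp only [Tm.app.sizeOf_spec]; have := List.sizeOf_lt_of_mem t.2; omega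

/-- Applying a substitution to a term. -/
def subst (σ : ℕ → Tm F) : Tm F → Tm F
  | .var x => σ x
  | .app f ts => .app f (ts.attach.map (fun t => subst σ t.1))
decreasing_by
  simp only [Tm.app.sizeOf_spec]; have := List.sizeOf_lt_of_mem t.2; omega

/-- The list of variable occurrences of a term. -/
def varList : Tm F → List ℕ
  | .var x => [x]
  | .app _ ts => (ts.attach.map (fun t => varList t.1)).foldr (· ++ ·) []
decreasing_by
  simp only [Tm.app.sizeOf_spec]; have := List.sizeOf_lt_of_mem t.2; omega

end Tm

variable {F : Type}

/-- Values: terms built from constructors (symbols `f` with `isDef f = false`)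
and variables only. -/
inductive IsValue (isDef : F → Bool) : Tm F → Prop
  | var (x) : IsValue isDef (.var x)
  | app (f ts) : isDef f = false → (∀ t ∈ ts, IsValue isDef t) → IsValue isDef (.app f ts)

/-- Arity-correct terms. -/
inductive WFT (ar : F → ℕ) : Tm F → Prop
  | var (x) : WFT ar (.var x)
  | app (f ts) : ts.length = ar f → (∀ t ∈ ts, WFT ar t) → WFT ar (.app f ts)

/-- Basic terms: a defined symbol applied to values. -/
def IsBasic (isDef : F → Bool) (t : Tm F) : Prop :=
  ∃ f ts, t = Tm.app f ts ∧ isDef f = true ∧ ∀ u ∈ ts, IsValue isDef u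

/-- Subterm relation (reflexive). -/
inductive Sub : Tm F → Tm F → Prop
  | refl (t) : Sub t t
  | arg (f) (ts : List (Tm F)) (t u) : t ∈ ts → Sub t u → Sub (.app f ts) u

/-- Proper (strict) subterm. -/
def PSub (s u : Tm F) : Prop := ∃ f ts, s = Tm.app f ts ∧ ∃ t ∈ ts, Sub t u

/-- A well-formed rewrite rule: arity-correct sides, the left-hand side is not a
variable, and all variables of the right-hand side occur in the left-hand side. -/
def WFRule (ar : F → ℕ) (ρ : Tm F × Tm F) : Prop :=
  WFT ar ρ.1 ∧ WFT ar ρ.2 ∧ (∀ x ∈ ρ.2.varList, x ∈ ρ.1.varList) ∧ ¬ ∃ x, ρ.1 = Tm.var x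

/-- A (finite) TRS is modelled as a list of rewrite rules. -/
def WFTRS (ar : F → ℕ) (R : List (Tm F × Tm F)) : Prop := ∀ ρ ∈ R, WFRule ar ρ

/-- A constructor TRS: all left-hand sides are basic terms. -/
def ConstructorTRS (ar : F → ℕ) (isDef : F → Bool) (R : List (Tm F × Tm F)) : Prop :=
  WFTRS ar R ∧ ∀ ρ ∈ R, IsBasic isDef ρ.1

/-- One-step rewrite relation: closure of the rules under contexts and substitutions. -/
inductive Rew (R : List (Tm F × Tm F)) : Tm F → Tm F → Prop
  | root (l r : Tm F) (σ : ℕ → Tm F) : (l, r) ∈ R → Rew R (l.subst σ) (r.subst σ)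
  | congr (f) (ts₁ ts₂ : List (Tm F)) (s t : Tm F) : Rew R s t →
      Rew R (.app f (ts₁ ++ s :: ts₂)) (.app f (ts₁ ++ t :: ts₂))

/-- Normal forms. -/
def IsNF (R : List (Tm F × Tm F)) (t : Tm F) : Prop := ∀ u, ¬ Rew R t u

/-- Innermost rewriting: the arguments of the contracted redex are normal forms. -/
inductive IRew (R : List (Tm F × Tm F)) : Tm F → Tm F → Prop
  | root (f : F) (ls : List (Tm F)) (r : Tm F) (σ : ℕ → Tm F) :
      (Tm.app f ls, r) ∈ R → (∀ l ∈ ls, IsNF R (l.subst σ)) →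
      IRew R ((Tm.app f ls).subst σ) (r.subst σ)
  | congr (f) (ts₁ ts₂ : List (Tm F)) (s t : Tm F) : IRew R s t →
      IRew R (.app f (ts₁ ++ s :: ts₂)) (.app f (ts₁ ++ t :: ts₂))

/-- `n`-fold composition of a relation. -/
def IterRel {α : Type*} (r : α → α → Prop) : ℕ → α → α → Prop
  | 0, a, b => a = b
  | n + 1, a, b => ∃ c, r a c ∧ IterRel r n c b

/-- Strict part `≻` of a preorder. -/
def PStrict {G : Type*} (ge : G → G → Prop) (f g : G) : Prop := ge f g ∧ ¬ ge g f

/-- Equivalence `∼` induced by a preorder. -/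
def PEquiv {G : Type*} (ge : G → G → Prop) (f g : G) : Prop := ge f g ∧ ge g f

/-- A precedence is a preorder on the signature. -/
def IsPrecedence {G : Type*} (ge : G → G → Prop) : Prop :=
  (∀ f, ge f f) ∧ ∀ f g h, ge f g → ge g h → ge f h

/-- Admissible precedence: a precedence such that equivalent symbols are both
defined or both constructors. -/
def Admissible (isDef : F → Bool) (ge : F → F → Prop) : Prop :=
  IsPrecedence ge ∧ ∀ f g, PEquiv ge f g → isDef f = isDef g

/-- A safe mapping: all argument positions of constructors are safe.
(`safe f i = true` means that the `i`-th argument position (0-based) of `f` is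
safe; positions with `safe f i = false` are normal.) -/
def SafeMap (ar : F → ℕ) (isDef : F → Bool) (safe : F → ℕ → Bool) : Prop :=
  ∀ f, isDef f = false → ∀ i < ar f, safe f i = true

/-- Safe equivalence `≈s`: equality up to equivalence of root symbols and
permutation of arguments, where the permutations respect the partitioning into
safe and normal argument positions. -/
inductive EqS (ge : F → F → Prop) (safe : F → ℕ → Bool) : Tm F → Tm F → Prop
  | refl (t) : EqS ge safe t t
  | app (f g) (ss ts : List (Tm F)) (π : Fin ss.length ≃ Fin ts.length) :
      PEquiv ge f g →
      (∀ i : Fin ss.length, EqS ge safe (ss.get i) (ts.get (π i))) →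
      (∀ i : Fin ss.length, safe f i.val = safe g (π i).val) →
      EqS ge safe (.app f ss) (.app g ts)

/-- `Below ge f t` expresses `t ∈ T(F≺f, V)`: all function symbols occurring in
`t` are strictly below `f` in the precedence. -/
inductive Below (ge : F → F → Prop) (f : F) : Tm F → Prop
  | var (x) : Below ge f (.var x)
  | app (g ts) : PStrict ge f g → (∀ t ∈ ts, Below ge f t) → Below ge f (.app g ts)

/-- Strict multiset extension of an order `gt` with compatible equivalence `eqv`
(Dershowitz–Manna extension on `eqv`-equivalence classes): `N` is obtained from
`M` by replacing a nonempty sub-multiset `X` by a multiset `Y` of elements each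
of which lies strictly below some element of `X`; the remainders `Z₁, Z₂` agree
up to `eqv`. -/
def MulExt {α : Type*} (gt eqv : α → α → Prop) (M N : Multiset α) : Prop :=
  ∃ Z₁ Z₂ X Y : Multiset α,
    M = Z₁ + X ∧ N = Z₂ + Y ∧ Multiset.Rel eqv Z₁ Z₂ ∧ X ≠ 0 ∧ ∀ y ∈ Y, ∃ x ∈ X, gt x y

/-- Weak multiset extension: strict decrease, or equality of the multisets of
equivalence classes. -/
def MulExtW {α : Type*} (gt eqv : α → α → Prop) (M N : Multiset α) : Prop :=
  MulExt gt eqv M N ∨ Multiset.Rel eqv M N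

/-- The multiset of arguments of `f(ss)` at positions with safeness-flag `b`
(`b = false`: normal arguments, `b = true`: safe arguments). -/
def argsWhere (safe : F → ℕ → Bool) (b : Bool) (f : F) (ss : List (Tm F)) : Multiset (Tm F) :=
  (((ss.zipIdx.map Prod.swap).filter (fun p => safe f p.1 = b)).map Prod.snd : List (Tm F))

/-- The auxiliary order `⊐sq` of the polynomial path order. -/
inductive GtSq (isDef : F → Bool) (ge : F → F → Prop) (safe : F → ℕ → Bool) :
    Tm F → Tm F → Prop
  | sub (f) (ss : List (Tm F)) (i : Fin ss.length) (t) :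
      (isDef f = true → safe f i.val = false) →
      GtSq isDef ge safe (ss.get i) t → GtSq isDef ge safe (.app f ss) t
  | subE (f) (ss : List (Tm F)) (i : Fin ss.length) (t) :
      (isDef f = true → safe f i.val = false) →
      EqS ge safe (ss.get i) t → GtSq isDef ge safe (.app f ss) t
  | prec (f g) (ss ts : List (Tm F)) : isDef f = true → PStrict ge f g →
      (∀ t ∈ ts, GtSq isDef ge safe (.app f ss) t) →
      GtSq isDef ge safe (.app f ss) (.app g ts)

/-- The polynomial path order `⊐pop*`.

The multiset comparisons of the `equiv` case (clause (3) of the definition)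
are stated in Skolemized form: the decompositions witnessing the strict/weak
multiset decreases are explicit constructor arguments.  Constructors `equivS`
and `equivE` correspond to the two alternatives (strict decrease, resp.
equality of the multisets of equivalence classes) of the weak multiset
comparison of the safe arguments. -/
inductive GtPop (isDef : F → Bool) (ge : F → F → Prop) (safe : F → ℕ → Bool) :
    Tm F → Tm F → Prop
  | sub (f) (ss : List (Tm F)) (i : Fin ss.length) (t) :
      GtPop isDef ge safe (ss.get i) t → GtPop isDef ge safe (.app f ss) t
  | subE (f) (ss : List (Tm F)) (i : Fin ss.length) (t) :
      EqS ge safe (ss.get i) t → GtPop isDef ge safe (.app f ss) t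
  | prec (f g) (ss ts : List (Tm F)) : isDef f = true → PStrict ge f g →
      (∀ j : Fin ts.length, safe g j.val = false →
        GtSq isDef ge safe (.app f ss) (ts.get j)) →
      (∀ j : Fin ts.length, safe g j.val = true →
        GtPop isDef ge safe (.app f ss) (ts.get j)) →
      (∀ j j' : Fin ts.length, safe g j.val = true → safe g j'.val = true →
        ¬ Below ge f (ts.get j) → ¬ Below ge f (ts.get j') → j = j') →
      GtPop isDef ge safe (.app f ss) (.app g ts)
  | equivS (f g) (ss ts : List (Tm F))
      (Z₁ Z₂ X : Multiset (Tm F)) (Y : List (Tm F)) (w : Fin Y.length → Tm F)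
      (W₁ W₂ X' : Multiset (Tm F)) (Y' : List (Tm F)) (w' : Fin Y'.length → Tm F) :
      isDef f = true → PEquiv ge f g →
      argsWhere safe false f ss = Z₁ + X →
      argsWhere safe false g ts = Z₂ + (↑Y : Multiset (Tm F)) →
      Multiset.Rel (EqS ge safe) Z₁ Z₂ → X ≠ 0 →
      (∀ j, w j ∈ X) → (∀ j, GtPop isDef ge safe (w j) (Y.get j)) →
      argsWhere safe true f ss = W₁ + X' →
      argsWhere safe true g ts = W₂ + (↑Y' : Multiset (Tm F)) →
      Multiset.Rel (EqS ge safe) W₁ W₂ → X' ≠ 0 →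
      (∀ j, w' j ∈ X') → (∀ j, GtPop isDef ge safe (w' j) (Y'.get j)) →
      GtPop isDef ge safe (.app f ss) (.app g ts)
  | equivE (f g) (ss ts : List (Tm F))
      (Z₁ Z₂ X : Multiset (Tm F)) (Y : List (Tm F)) (w : Fin Y.length → Tm F) :
      isDef f = true → PEquiv ge f g →
      argsWhere safe false f ss = Z₁ + X →
      argsWhere safe false g ts = Z₂ + (↑Y : Multiset (Tm F)) →
      Multiset.Rel (EqS ge safe) Z₁ Z₂ → X ≠ 0 →
      (∀ j, w j ∈ X) → (∀ j, GtPop isDef ge safe (w j) (Y.get j)) →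
      Multiset.Rel (EqS ge safe) (argsWhere safe true f ss) (argsWhere safe true g ts) →
      GtPop isDef ge safe (.app f ss) (.app g ts)

/-- The polynomial path order with parameter substitution `⊐pop*ps`: as
`⊐pop*`, but in the `equiv` case the safe arguments `tⱼ` of the right-hand side
are compared via `s ⊐pop*ps tⱼ` and must lie in `T(F≺f, V)`. -/
inductive GtPopPS (isDef : F → Bool) (ge : F → F → Prop) (safe : F → ℕ → Bool) :
    Tm F → Tm F → Prop
  | sub (f) (ss : List (Tm F)) (i : Fin ss.length) (t) :
      GtPopPS isDef ge safe (ss.get i) t → GtPopPS isDef ge safe (.app f ss) t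
  | subE (f) (ss : List (Tm F)) (i : Fin ss.length) (t) :
      EqS ge safe (ss.get i) t → GtPopPS isDef ge safe (.app f ss) t
  | prec (f g) (ss ts : List (Tm F)) : isDef f = true → PStrict ge f g →
      (∀ j : Fin ts.length, safe g j.val = false →
        GtSq isDef ge safe (.app f ss) (ts.get j)) →
      (∀ j : Fin ts.length, safe g j.val = true →
        GtPopPS isDef ge safe (.app f ss) (ts.get j)) →
      (∀ j j' : Fin ts.length, safe g j.val = true → safe g j'.val = true →
        ¬ Below ge f (ts.get j) → ¬ Below ge f (ts.get j') → j = j') →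
      GtPopPS isDef ge safe (.app f ss) (.app g ts)
  | equiv (f g) (ss ts : List (Tm F))
      (Z₁ Z₂ X : Multiset (Tm F)) (Y : List (Tm F)) (w : Fin Y.length → Tm F) :
      isDef f = true → PEquiv ge f g →
      argsWhere safe false f ss = Z₁ + X →
      argsWhere safe false g ts = Z₂ + (↑Y : Multiset (Tm F)) →
      Multiset.Rel (EqS ge safe) Z₁ Z₂ → X ≠ 0 →
      (∀ j, w j ∈ X) → (∀ j, GtPopPS isDef ge safe (w j) (Y.get j)) →
      (∀ j : Fin ts.length, safe g j.val = true →
        GtPopPS isDef ge safe (.app f ss) (ts.get j)) →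
      (∀ j : Fin ts.length, safe g j.val = true → Below ge f (ts.get j)) →
      GtPopPS isDef ge safe (.app f ss) (.app g ts)

/-- A constructor TRS is predicative recursive w.r.t. a given admissible
precedence and safe mapping if all its rules are oriented by the induced
polynomial path order. -/
def PredicativeRecursive (ar : F → ℕ) (isDef : F → Bool) (safe : F → ℕ → Bool)
    (ge : F → F → Prop) (R : List (Tm F × Tm F)) : Prop :=
  ConstructorTRS ar isDef R ∧ Admissible isDef ge ∧ SafeMap ar isDef safe ∧
    ∀ ρ ∈ R, GtPop isDef ge safe ρ.1 ρ.2

/-- The maximum of the depths of the normal arguments of `f(ss)`. -/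
def maxNormalDepth (safe : F → ℕ → Bool) (f : F) (ss : List (Tm F)) : ℕ :=
  (((ss.zipIdx.map Prod.swap).filter (fun p => safe f p.1 = false)).map (fun p => Tm.depth p.2)).foldr max 0

/-- One-hole contexts. -/
inductive Ctx (F : Type) : Type
  | hole : Ctx F
  | app : F → List (Tm F) → Ctx F → List (Tm F) → Ctx F

/-- Plugging a term into a context. -/
def Ctx.fill : Ctx F → Tm F → Tm F
  | .hole, s => s
  | .app f ts₁ C ts₂, s => .app f (ts₁ ++ [C.fill s] ++ ts₂)

/-! ## Terms with sequence arguments and sequences -/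

/-- Terms with sequence arguments, and sequences, over a (normalised) signature
`G`.  Well-formedness is captured by `IsSTm`/`IsSSeq` below. -/
inductive SExp (G : Type) : Type
  | var : ℕ → SExp G
  | app : G → List (SExp G) → SExp G
  | lst : List (SExp G) → SExp G

namespace SExp
variable {G : Type}

/-- View an element of `T ∪ S` as a list of elements (a term is a singleton). -/
def toL : SExp G → List (SExp G)
  | .lst ts => ts
  | .var x => [.var x]
  | .app f as => [.app f as]

/-- Concatenation of terms/sequences. -/
def cat (a b : SExp G) : SExp G := .lst (a.toL ++ b.toL)

/-- Concatenation `c₁ @ ⋯ @ cₙ` of a list of terms/sequences. -/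
def catAll (cs : List (SExp G)) : SExp G := .lst ((cs.map toL).foldr (· ++ ·) [])

/-- The length `len(a)`: the number of elements. -/
def slen (a : SExp G) : ℕ := a.toL.length

/-- The width `w(a)`. -/
def width : SExp G → ℕ
  | .var _ => 1
  | .app _ as => (as.attach.map (fun a => width a.1)).foldr max 1
  | .lst ts => (ts.attach.map (fun t => width t.1)).sum
decreasing_by
  · simp only [SExp.app.sizeOf_spec]; have := List.sizeOf_lt_of_mem a.2; omega
  · simp only [SExp.lst.sizeOf_spec]; have := List.sizeOf_lt_of_mem t.2; omega

end SExp

/-- Ground terms/sequences: no variable occurs. -/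
inductive SGround {G : Type} : SExp G → Prop
  | app (f) (as : List (SExp G)) : (∀ a ∈ as, SGround a) → SGround (.app f as)
  | lst (ts : List (SExp G)) : (∀ t ∈ ts, SGround t) → SGround (.lst ts)

mutual
/-- Well-formed terms with sequence arguments (w.r.t. arities `nar` on `G`). -/
inductive IsSTm {G : Type} (nar : G → ℕ) : SExp G → Prop
  | var (x) : IsSTm nar (.var x)
  | app (f) (as : List (SExp G)) : as.length = nar f →
      (∀ a ∈ as, IsSSeq nar a) → IsSTm nar (.app f as)

/-- Well-formed sequences: lists of well-formed terms. -/
inductive IsSSeq {G : Type} (nar : G → ℕ) : SExp G → Prop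
  | lst (ts : List (SExp G)) : (∀ t ∈ ts, IsSTm nar t) → IsSSeq nar (.lst ts)
end

/-- Equivalence `≈` on terms/sequences: equality up to permutation of
arguments/elements and equivalence of root symbols. -/
inductive SEqv {G : Type} (ge : G → G → Prop) : SExp G → SExp G → Prop
  | var (x) : SEqv ge (.var x) (.var x)
  | app (f g) (as bs : List (SExp G)) (π : Fin as.length ≃ Fin bs.length) :
      PEquiv ge f g → (∀ i, SEqv ge (as.get i) (bs.get (π i))) →
      SEqv ge (.app f as) (.app g bs)
  | lst (ts us : List (SExp G)) (π : Fin ts.length ≃ Fin us.length) :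
      (∀ i, SEqv ge (ts.get i) (us.get (π i))) → SEqv ge (.lst ts) (.lst us)

/-- The finite approximations `⊐ₖ,ₗ` of the auxiliary order of the polynomial
path order on sequences.  In the `lst` case (clause (4)), the weak comparisons
`aᵢ ⊒ cᵢ` are recorded via an explicit strictness marker `str`. -/
inductive GtA {G : Type} (ge : G → G → Prop) (k : ℕ) : ℕ → SExp G → SExp G → Prop
  | sub (l f) (as : List (SExp G)) (i : Fin as.length) (b) :
      GtA ge k l (as.get i) b → GtA ge k l (.app f as) b
  | subE (l f) (as : List (SExp G)) (i : Fin as.length) (b) :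
      SEqv ge (as.get i) b → GtA ge k l (.app f as) b
  | prec (l f g) (as bs : List (SExp G)) : PStrict ge f g →
      (∀ b ∈ bs, GtA ge k l (.app f as) b) → bs.length ≤ k →
      GtA ge k (l + 1) (.app f as) (.app g bs)
  | toLst (l f) (as bs : List (SExp G)) :
      (∀ b ∈ bs, GtA ge k l (.app f as) b) →
      bs.length ≤ SExp.width (.app f as) + k →
      GtA ge k (l + 1) (.app f as) (.lst bs)
  | lst (l) (as bs cs : List (SExp G)) (h : cs.length = as.length)
      (str : Fin as.length → Bool) (i₀ : Fin as.length) :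
      SEqv ge (.lst bs) (SExp.catAll cs) →
      (∀ i : Fin as.length, str i = true →
        GtA ge k l (as.get i) (cs.get (Fin.cast h.symm i))) →
      (∀ i : Fin as.length, str i = false →
        SEqv ge (as.get i) (cs.get (Fin.cast h.symm i))) →
      str i₀ = true →
      bs.length ≤ SExp.width (.lst as) + k →
      GtA ge k l (.lst as) (.lst bs)

/-- The finite approximations `≫ₖ,ₗ` of the polynomial path order on sequences:
the least extension of `⊐ₖ,ₗ` by the clauses (b1)–(b4).  The strict multiset
comparison in the `equiv` case (b2) is stated in Skolemized form. -/
inductive GtF {G : Type} (ge : G → G → Prop) (k : ℕ) : ℕ → SExp G → SExp G → Prop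
  | base (l a b) : GtA ge k l a b → GtF ge k l a b
  | sub (l f) (as : List (SExp G)) (i : Fin as.length) (b) :
      GtF ge k l (as.get i) b → GtF ge k l (.app f as) b
  | equiv (l f g) (as bs : List (SExp G))
      (Z₁ Z₂ X : Multiset (SExp G)) (Y : List (SExp G)) (w : Fin Y.length → SExp G) :
      PEquiv ge f g →
      (↑as : Multiset (SExp G)) = Z₁ + X →
      (↑bs : Multiset (SExp G)) = Z₂ + (↑Y : Multiset (SExp G)) →
      Multiset.Rel (SEqv ge) Z₁ Z₂ → X ≠ 0 →
      (∀ j, w j ∈ X) → (∀ j, GtF ge k l (w j) (Y.get j)) →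
      bs.length ≤ k →
      GtF ge k l (.app f as) (.app g bs)
  | toLst (l f) (as bs : List (SExp G)) (j₀ : Fin bs.length) :
      GtF ge k l (.app f as) (bs.get j₀) →
      (∀ j : Fin bs.length, j ≠ j₀ → GtA ge k l (.app f as) (bs.get j)) →
      bs.length ≤ SExp.width (.app f as) + k →
      GtF ge k (l + 1) (.app f as) (.lst bs)
  | lst (l) (as bs cs : List (SExp G)) (h : cs.length = as.length)
      (str : Fin as.length → Bool) (i₀ : Fin as.length) :
      SEqv ge (.lst bs) (SExp.catAll cs) →
      (∀ i : Fin as.length, str i = true →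
        GtF ge k l (as.get i) (cs.get (Fin.cast h.symm i))) →
      (∀ i : Fin as.length, str i = false →
        SEqv ge (as.get i) (cs.get (Fin.cast h.symm i))) →
      str i₀ = true →
      bs.length ≤ SExp.width (.lst as) + k →
      GtF ge k l (.lst as) (.lst bs)

/-! ## The normalised signature and predicative interpretations -/

/-- Lifting of a precedence on `F` to the normalised signature `Fn ∪ {•}`
(modelled as `Option F`, where `some f` is `fn` and `none` is the fresh
constant `•`): `fn ≿ gn` iff `f ≿ g`, and every `fn` lies strictly above `•`. -/
def liftge (ge : F → F → Prop) : Option F → Option F → Prop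
  | some f, some g => ge f g
  | _, none => True
  | none, some _ => False

/-- The (0-based) normal argument positions of `f`, in increasing order. -/
def normalIdxs (ar : F → ℕ) (safe : F → ℕ → Bool) (f : F) : List ℕ :=
  (List.range (ar f)).filter (fun i => safe f i = false)

/-- The (0-based) safe argument positions of `f`, in increasing order. -/
def safeIdxs (ar : F → ℕ) (safe : F → ℕ → Bool) (f : F) : List ℕ :=
  (List.range (ar f)).filter (fun i => safe f i = true)

/-- Arities on the normalised signature: `fn` keeps only the normal argument
positions of `f`; the fresh constant `•` has no arguments. -/
def snar (ar : F → ℕ) (safe : F → ℕ → Bool) : Option F → ℕ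
  | none => 0
  | some f => (normalIdxs ar safe f).length

/-- The fresh constant `•`. -/
def bullet {F : Type} : SExp (Option F) := .app none []

/-- The tally sequence `n̂` encoding the natural number `n`. -/
def tally {F : Type} (n : ℕ) : SExp (Option F) := .lst (List.replicate n bullet)

/-- The norm `‖t‖` of a term: like the depth, but only safe argument positions
are taken into account. -/
def norm (safe : F → ℕ → Bool) : Tm F → ℕ
  | .var _ => 1
  | .app f ss =>
      1 + ((((ss.attach.map (fun t => norm safe t.1)).zipIdx.map Prod.swap).filter
              (fun p => safe f p.1 = true)).map Prod.snd).foldr max 0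
decreasing_by
  simp only [Tm.app.sizeOf_spec]; have := List.sizeOf_lt_of_mem t.2; omega

open Classical in
/-- The predicative interpretation `S` w.r.t. a TRS `R`:
`S(t) = []` if `t` is a normal form of `R`, and otherwise
`S(f(s₁,…,sₖ; sₖ₊₁,…,sₖ₊ₗ)) = [fn(N(s₁),…,N(sₖ))] @ S(sₖ₊₁) @ ⋯ @ S(sₖ₊ₗ)`,
where `N(t) = S(t) @ ‖t‖̂`. -/
noncomputable def Sint (R : List (Tm F × Tm F)) (ar : F → ℕ) (safe : F → ℕ → Bool) :
    Tm F → SExp (Option F)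
  | .var _ => .lst []
  | .app f ss =>
      if IsNF R (Tm.app f ss) then .lst []
      else
        let sInt := ss.attach.map (fun t => Sint R ar safe t.1)
        let nInt := ss.attach.map (fun t =>
          SExp.cat (Sint R ar safe t.1) (tally (norm safe t.1)))
        .lst (SExp.app (some f)
                ((normalIdxs ar safe f).map (fun i => nInt.getD i (.lst []))) ::
              ((safeIdxs ar safe f).map
                (fun i => (sInt.getD i (.lst [])).toL)).foldr (· ++ ·) [])
decreasing_by
  all_goals (simp only [Tm.app.sizeOf_spec]; have := List.sizeOf_lt_of_mem t.2; omega)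

/-- The predicative interpretation `N`: `N(t) = S(t) @ ‖t‖̂`. -/
noncomputable def Nint (R : List (Tm F × Tm F)) (ar : F → ℕ) (safe : F → ℕ → Bool)
    (t : Tm F) : SExp (Option F) :=
  SExp.cat (Sint R ar safe t) (tally (norm safe t))

/-! ## Measures -/

/-- `hFun k c ms = Σᵢ srt(i)·c^(k−i)` where `srt(i)` is the `i`-th largest
entry of `ms` (1-based): the order-preserving homomorphism `h(k,n,c)`. -/
def hFun (k c : ℕ) (ms : List ℕ) : ℕ :=
  (((ms.insertionSort (· ≥ ·)).zipIdx.map Prod.swap).map (fun p => p.2 * c ^ (k - 1 - p.1))).sum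

/-- `M(k,n)(a₁,…,aₙ) = h(k,n,c)(Gf a₁,…,Gf aₙ)` with `c = 1 + max Gf aᵢ`. -/
def Mfun {α : Type*} (Gf : α → ℕ) (k : ℕ) (as : List α) : ℕ :=
  hFun k (1 + (as.map Gf).foldr max 0) (as.map Gf)

/-- `Gf` measures the length of maximal descending `ord`-chains on ground
elements: `Gf a = sup {Gf b + 1 | b ground, a ord b}`. -/
def IsChainMeasure {β : Type*} (ground : β → Prop) (ord : β → β → Prop) (Gf : β → ℕ) : Prop :=
  ∀ a, ground a → Gf a = sSup {m | ∃ b, ground b ∧ ord a b ∧ m = Gf b + 1}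

/-- `rk` is the rank function of the precedence `ge`:
`rk f = max({0} ∪ {1 + rk g | f ≻ g})`. -/
def IsRank {G : Type*} (ge : G → G → Prop) (rk : G → ℕ) : Prop :=
  ∀ f, rk f = sSup {m | ∃ g, PStrict ge f g ∧ m = rk g + 1}

/-- The constants `d(k,p)`. -/
def dconst (k : ℕ) : ℕ → ℕ
  | 0 => k + 1
  | p + 1 => (dconst k p * k) ^ (k + 1) + 1

/-- The constants `c(k,p)`. -/
def cconst (k : ℕ) : ℕ → ℕ
  | 0 => k ^ k
  | p + 1 => (cconst k p * k) ^ ((Finset.Icc 1 k).sum fun i => (k * dconst k p) ^ i)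

/-- The auxiliary functions `g(k,l,p)(m)` (here `gfun k p l m`). -/
def gfun (k p : ℕ) : ℕ → ℕ → ℕ
  | l, m =>
    if p = 0 then k ^ l * m ^ l
    else
      match l with
      | 0 => m
      | 1 => m
      | l' + 2 => cconst k (p - 1) * (m * gfun k p (l' + 1) m) ^ (k * dconst k (p - 1))

end PPO

namespace PPO

/-! **Statement 1** (Lemma 15 of the paper): the family of TRSs `R_k`. -/

/-- The signature of `R_k`: the defined symbol `f_k` (here `fk`), the unary
constructor `s` and the constant `0` (here `z`). -/
inductive SymK : Type
  | fk | s | z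
deriving DecidableEq

instance : Fintype SymK :=
  ⟨{.fk, .s, .z}, by intro x; cases x <;> simp⟩

/-- Arities: `f_k` is `k`-ary, `s` unary, `0` a constant. -/
def arK (k : ℕ) : SymK → ℕ
  | .fk => k
  | .s => 1
  | .z => 0

/-- `f_k` is the only defined symbol. -/
def isDefK : SymK → Bool
  | .fk => true
  | .s => false
  | .z => false

/-- All argument positions of `f_k` are normal; constructor positions are safe. -/
def safeK : SymK → ℕ → Bool
  | .fk, _ => false
  | .s, _ => true
  | .z, _ => true

def zeroK : Tm SymK := .app .z []

def sK (t : Tm SymK) : Tm SymK := .app .s [t]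

/-- Numerals `s^n(0)`. -/
def numK : ℕ → Tm SymK
  | 0 => zeroK
  | n + 1 => sK (numK n)

/-- The left-hand side of the `(j+1)`-st rule (0-based `j < k`):
`f_k(0,…,0, s(x_j), x_{j+1}, …, x_{k-1})` with `j` leading `0`s. -/
def lhsK (k j : ℕ) : Tm SymK :=
  .app .fk (List.replicate j zeroK ++ sK (.var j) ::
    (List.range (k - j - 1)).map (fun i => .var (j + 1 + i)))

/-- The right-hand side of the `(j+1)`-st rule:
`f_k(x_j,…,x_j, x_{j+1}, …, x_{k-1})` with `j+1` leading copies of `x_j`. -/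
def rhsK (k j : ℕ) : Tm SymK :=
  .app .fk (List.replicate (j + 1) (.var j) ++
    (List.range (k - j - 1)).map (fun i => .var (j + 1 + i)))

/-- The TRS `R_k`. -/
def RK (k : ℕ) : List (Tm SymK × Tm SymK) :=
  (List.range k).map (fun j => (lhsK k j, rhsK k j))

/-
Every rule of `R_k` replaces the normal arguments `0,…,0, s(x_j)` by copies of `x_j`, each
a proper subterm of `s(x_j)`, so clause (3) of `⊐pop*` orients it with `f_k ∼ f_k`.

For the lower bound let `T(j, x)` be the number of innermost steps from
`f_k(x,…,x, rest)` (with `j` copies of `sˣ(0)`) to `f_k(0,…,0, rest)`. Clearing the first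
`j - 1` copies of `x + 1`, one step with rule `j`, and clearing the resulting `j` copies of
`x` give `T(j, x + 1) = T(j - 1, x + 1) + 1 + T(j, x)`, so Pascal's rule yields
`T(j, x) = C(x + j, j) - 1`. Finally `k! · C(n + k, k) = (n + 1)⋯(n + k) ≥ nᵏ`.
-/

namespace IterRel

variable {α : Type*} {r : α → α → Prop}

theorem single {a b : α} (h : r a b) : IterRel r 1 a b := ⟨b, h, rfl⟩

theorem add {m n : ℕ} {a b c : α} (hab : IterRel r m a b) (hbc : IterRel r n b c) :
    IterRel r (m + n) a c := by
  induction m generalizing a with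
  | zero =>
    obtain rfl : a = b := hab
    simpa using hbc
  | succ m ih =>
    obtain ⟨d, had, hdb⟩ := hab
    rw [Nat.add_right_comm]
    exact ⟨d, had, ih hdb⟩

theorem mono {r' : α → α → Prop} (hr : ∀ a b, r a b → r' a b) {m : ℕ} {a b : α}
    (h : IterRel r m a b) : IterRel r' m a b := by
  induction m generalizing a with
  | zero => exact h
  | succ m ih =>
    obtain ⟨c, hac, hcb⟩ := h
    exact ⟨c, hr _ _ hac, ih hcb⟩

end IterRel

namespace Tm

variable {F : Type}

theorem subst_app (σ : ℕ → Tm F) (f : F) (ts : List (Tm F)) :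
    (app f ts).subst σ = app f (ts.map (subst σ)) := by
  rw [subst, List.attach_map_val]

theorem size_app (f : F) (ts : List (Tm F)) : (app f ts).size = 1 + (ts.map size).sum := by
  rw [size, List.attach_map_val]

theorem mem_varList_app {x : ℕ} {f : F} {ts : List (Tm F)} :
    x ∈ (app f ts).varList ↔ ∃ t ∈ ts, x ∈ t.varList := by
  rw [varList, List.attach_map_val]
  induction ts with
  | nil => simp
  | cons t ts ih => simp [ih]

end Tm

variable {F : Type}

theorem IRew.toRew {R : List (Tm F × Tm F)} {s t : Tm F} (h : IRew R s t) : Rew R s t := by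
  induction h with
  | root f ls r σ hmem _ => exact .root _ _ σ hmem
  | congr f ts₁ ts₂ s t _ ih => exact .congr f ts₁ ts₂ s t ih

theorem IsValue.isNF {isDef : F → Bool} {R : List (Tm F × Tm F)}
    (hR : ∀ ρ ∈ R, IsBasic isDef ρ.1) {t : Tm F} (ht : IsValue isDef t) : IsNF R t := by
  intro u h
  induction h with
  | root l r σ hlr =>
    obtain ⟨f, ts, rfl, hf, -⟩ := hR _ hlr
    rw [Tm.subst_app] at ht
    cases ht with
    | app _ _ hf' _ => simp_all
  | congr f ts₁ ts₂ s t _ ih =>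
    cases ht with
    | app _ _ _ hargs => exact ih (hargs s (by simp))

theorem admissible_isDef_eq (isDef : F → Bool) :
    Admissible isDef (fun f g => isDef f = isDef g) :=
  ⟨⟨fun _ => rfl, fun _ _ _ => Eq.trans⟩, fun _ _ h => h.1⟩

theorem argsWhere_eq_coe {safe : F → ℕ → Bool} {b : Bool} {f : F} (h : ∀ i, safe f i = b)
    (ss : List (Tm F)) : argsWhere safe b f ss = ss := by
  rw [argsWhere, List.filter_eq_self.mpr (fun p _ => by simp [h]), List.map_map]
  exact congrArg _ (List.zipIdx_map_fst 0 ss)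

theorem argsWhere_eq_zero {safe : F → ℕ → Bool} {b : Bool} {f : F} (h : ∀ i, safe f i ≠ b)
    (ss : List (Tm F)) : argsWhere safe b f ss = 0 := by
  rw [argsWhere, List.filter_eq_nil_iff.mpr (fun p _ => by simp [h])]
  rfl

theorem isValue_numK (n : ℕ) : IsValue isDefK (numK n) := by
  induction n with
  | zero => exact .app _ _ rfl (by simp)
  | succ n ih => exact .app _ _ rfl (by simpa [sK] using ih)

theorem wft_numK (k n : ℕ) : WFT (arK k) (numK n) := by
  induction n with
  | zero => exact .app _ _ rfl (by simp)
  | succ n ih => exact .app _ _ rfl (by simpa [sK] using ih)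

theorem size_numK (n : ℕ) : (numK n).size = n + 1 := by
  induction n with
  | zero => simp [numK, zeroK, Tm.size_app]
  | succ n ih => simp [numK, sK, Tm.size_app, ih, Nat.add_comm]

theorem mem_RK {k : ℕ} {ρ : Tm SymK × Tm SymK} :
    ρ ∈ RK k ↔ ∃ j < k, (lhsK k j, rhsK k j) = ρ := by
  simp [RK]

/-- The variables `x_{j+1}, …, x_{k-1}` shared by both sides of the `(j+1)`-st rule. -/
def tailVarsK (k j : ℕ) : List (Tm SymK) :=
  (List.range (k - j - 1)).map (fun i => .var (j + 1 + i))

theorem lhsK_eq (k j : ℕ) :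
    lhsK k j = .app .fk (List.replicate j zeroK ++ sK (.var j) :: tailVarsK k j) := rfl

theorem rhsK_eq (k j : ℕ) :
    rhsK k j = .app .fk (List.replicate (j + 1) (.var j) ++ tailVarsK k j) := rfl

theorem exists_eq_var_of_mem_tailVarsK {k j : ℕ} {t : Tm SymK} (ht : t ∈ tailVarsK k j) :
    ∃ i, t = .var i := by
  obtain ⟨i, -, rfl⟩ := List.mem_map.1 ht
  exact ⟨_, rfl⟩

theorem isValue_of_mem_lhsK_args {k j : ℕ} {t : Tm SymK}
    (ht : t ∈ List.replicate j zeroK ++ sK (.var j) :: tailVarsK k j) :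
    IsValue isDefK t := by
  simp only [List.mem_append, List.mem_cons] at ht
  rcases ht with ht | rfl | ht
  · rw [List.eq_of_mem_replicate ht]
    exact isValue_numK 0
  · exact .app _ _ rfl (by simpa using IsValue.var j)
  · obtain ⟨i, rfl⟩ := exists_eq_var_of_mem_tailVarsK ht
    exact .var i

theorem isBasic_lhsK (k j : ℕ) : IsBasic isDefK (lhsK k j) :=
  ⟨.fk, _, rfl, rfl, fun _ => isValue_of_mem_lhsK_args⟩

theorem wft_lhsK {k j : ℕ} (hj : j < k) : WFT (arK k) (lhsK k j) := by
  refine .app _ _ (by simp [arK]; omega) fun t ht => ?_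
  simp only [List.mem_append, List.mem_cons] at ht
  rcases ht with ht | rfl | ht
  · rw [List.eq_of_mem_replicate ht]
    exact wft_numK k 0
  · exact .app _ _ rfl (by simpa using WFT.var j)
  · obtain ⟨i, rfl⟩ := exists_eq_var_of_mem_tailVarsK ht
    exact .var i

theorem wft_rhsK {k j : ℕ} (hj : j < k) : WFT (arK k) (rhsK k j) := by
  refine .app _ _ (by simp [arK]; omega) fun t ht => ?_
  rcases List.mem_append.1 ht with ht | ht
  · rw [List.eq_of_mem_replicate ht]
    exact .var j
  · obtain ⟨i, rfl⟩ := exists_eq_var_of_mem_tailVarsK ht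
    exact .var i

theorem varList_rhsK_subset (k j : ℕ) : ∀ x ∈ (rhsK k j).varList, x ∈ (lhsK k j).varList := by
  intro x hx
  rw [rhsK_eq, Tm.mem_varList_app] at hx
  rw [lhsK_eq, Tm.mem_varList_app]
  obtain ⟨t, ht, hxt⟩ := hx
  rcases List.mem_append.1 ht with ht | ht
  · rw [List.eq_of_mem_replicate ht] at hxt
    exact ⟨sK (.var j), by simp, by simpa [sK, Tm.mem_varList_app] using hxt⟩
  · exact ⟨t, by simp [ht], hxt⟩

theorem constructorTRS_RK (k : ℕ) : ConstructorTRS (arK k) isDefK (RK k) := by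
  refine ⟨fun ρ hρ => ?_, fun ρ hρ => ?_⟩ <;> obtain ⟨j, hj, rfl⟩ := mem_RK.1 hρ
  · exact ⟨wft_lhsK hj, wft_rhsK hj, varList_rhsK_subset k j, by simp [lhsK]⟩
  · exact isBasic_lhsK k j

theorem safeMap_safeK (k : ℕ) : SafeMap (arK k) isDefK safeK := by
  intro f hf i _
  cases f <;> simp_all [isDefK, safeK]

theorem gtPop_lhsK_rhsK (ge : SymK → SymK → Prop) (hge : ge .fk .fk) (k j : ℕ) :
    GtPop isDefK ge safeK (lhsK k j) (rhsK k j) := by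
  have hnormal := argsWhere_eq_coe (safe := safeK) (b := false) (f := .fk) fun _ => rfl
  have hsafe := argsWhere_eq_zero (safe := safeK) (b := true) (f := .fk) fun _ => by simp [safeK]
  rw [lhsK_eq, rhsK_eq]
  refine GtPop.equivE (isDef := isDefK) .fk .fk _ _ (tailVarsK k j) (tailVarsK k j)
    (List.replicate j zeroK ++ [sK (.var j)]) (List.replicate (j + 1) (.var j))
    (fun _ => sK (.var j)) rfl ⟨hge, hge⟩ ?_ ?_
    (Multiset.rel_refl_of_refl_on fun t _ => .refl t) (by simp) (fun _ => by simp)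
    (fun i => ?_) (by simp [hsafe])
  · rw [hnormal, List.append_cons, ← Multiset.coe_add, add_comm]
  · rw [hnormal, ← Multiset.coe_add, add_comm]
  · rw [List.get_eq_getElem, List.getElem_replicate]
    exact .subE SymK.s [.var j] ⟨0, by simp⟩ _ (.refl _)

def fkNum (a : List ℕ) : Tm SymK := .app .fk (a.map numK)

theorem isNF_numK (k n : ℕ) : IsNF (RK k) (numK n) :=
  (isValue_numK n).isNF fun _ hρ => by
    obtain ⟨j, -, rfl⟩ := mem_RK.1 hρ
    exact isBasic_lhsK k j

theorem map_subst_tailVarsK {k j : ℕ} {σ : ℕ → ℕ} {rest : List ℕ}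
    (hlen : j + 1 + rest.length = k) (hσ : ∀ i (hi : i < rest.length), σ (j + 1 + i) = rest[i]) :
    (tailVarsK k j).map (Tm.subst (numK ∘ σ)) = rest.map numK := by
  refine List.ext_getElem (by simp [tailVarsK]; omega) fun i hi _ => ?_
  simp only [tailVarsK, List.length_map, List.length_range] at hi
  simp [tailVarsK, Tm.subst, hσ i (by omega)]

theorem iRew_fkNum {k j x : ℕ} {rest : List ℕ} (hlen : j + 1 + rest.length = k) :
    IRew (RK k) (fkNum (List.replicate j 0 ++ (x + 1) :: rest))
      (fkNum (List.replicate (j + 1) x ++ rest)) := by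
  set σ : ℕ → ℕ := fun i => if i ≤ j then x else rest.getD (i - (j + 1)) 0
  have htail := map_subst_tailVarsK (σ := σ) hlen fun i hi => by
    simp [σ, if_neg (show ¬ j + 1 + i ≤ j by omega), hi]
  have hσj : Tm.subst (numK ∘ σ) (.var j) = numK x := by simp [Tm.subst, σ]
  have hlhs : (List.replicate j zeroK ++ sK (.var j) :: tailVarsK k j).map (Tm.subst (numK ∘ σ)) =
      (List.replicate j 0 ++ (x + 1) :: rest).map numK := by
    simp [htail, sK, zeroK, Tm.subst_app, hσj, numK]
  have hrhs :
      (List.replicate (j + 1) (Tm.var j) ++ tailVarsK k j).map (Tm.subst (numK ∘ σ)) =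
      (List.replicate (j + 1) x ++ rest).map numK := by
    simp [htail, hσj]
  have hnf : ∀ l ∈ List.replicate j zeroK ++ sK (.var j) :: tailVarsK k j,
      IsNF (RK k) (l.subst (numK ∘ σ)) := fun l hl => by
    obtain ⟨a, -, ha⟩ := List.mem_map.1 (hlhs ▸ List.mem_map_of_mem hl)
    exact ha ▸ isNF_numK k a
  have hstep := IRew.root .fk _ (rhsK k j) (numK ∘ σ) (mem_RK.2 ⟨j, by omega, rfl⟩) hnf
  rwa [rhsK_eq, Tm.subst_app, Tm.subst_app, hlhs, hrhs] at hstep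

theorem exists_iterRel_fkNum_replicate (k x j : ℕ) (rest : List ℕ) (hlen : j + rest.length = k) :
    ∃ m, (x + j).choose j ≤ m + 1 ∧ IterRel (IRew (RK k)) m
      (fkNum (List.replicate j x ++ rest)) (fkNum (List.replicate j 0 ++ rest)) := by
  induction x generalizing j rest with
  | zero => exact ⟨0, by simp, rfl⟩
  | succ x ihx =>
    induction j generalizing rest with
    | zero => exact ⟨0, by simp, rfl⟩
    | succ j ihj =>
      obtain ⟨m₁, hm₁, hrun₁⟩ := ihj ((x + 1) :: rest) (by rw [List.length_cons]; omega)
      obtain ⟨m₂, hm₂, hrun₂⟩ := ihx (j + 1) rest hlen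
      refine ⟨m₁ + 1 + m₂, ?_, ?_⟩
      · rw [show x + 1 + (j + 1) = x + 1 + j + 1 by omega, Nat.choose_succ_succ']
        rw [show x + (j + 1) = x + 1 + j by omega] at hm₂
        omega
      · rw [List.replicate_succ', List.append_assoc, List.singleton_append]
        exact (hrun₁.add (.single (iRew_fkNum hlen))).add hrun₂

theorem pow_le_two_mul_factorial_mul {n k m : ℕ} (hn : 1 ≤ n) (hk : 1 ≤ k)
    (hm : (n + k).choose k ≤ m + 1) : n ^ k ≤ 2 * k.factorial * m := by
  have hchoose : 2 ≤ (n + k).choose k :=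
    calc 2 ≤ (k + 1).choose k := by simp [Nat.choose_succ_self_right]; omega
      _ ≤ (n + k).choose k := Nat.choose_le_choose k (by omega)
  calc n ^ k ≤ (n + 1) ^ k := Nat.pow_le_pow_left n.le_succ k
    _ ≤ (n + 1).ascFactorial k := Nat.pow_succ_le_ascFactorial (n + 1) k
    _ = k.factorial * (n + k).choose k := Nat.ascFactorial_eq_factorial_mul_choose n k
    _ ≤ k.factorial * (2 * m) := Nat.mul_le_mul_left _ (by omega)
    _ = 2 * k.factorial * m := by ring

theorem exists_iterRel_numK {k n : ℕ} (hk : 1 ≤ k) (hn : 1 ≤ n) :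
    ∃ m, n ^ k ≤ 2 * k.factorial * m ∧ IterRel (IRew (RK k)) m
      (.app .fk (List.replicate k (numK n))) (.app .fk (List.replicate k zeroK)) := by
  obtain ⟨m, hm, hrun⟩ := exists_iterRel_fkNum_replicate k n k [] (by simp)
  refine ⟨m, pow_le_two_mul_factorial_mul hn hk hm, ?_⟩
  simpa [fkNum, numK] using hrun

theorem size_app_replicate_numK (f : SymK) (k x : ℕ) :
    (Tm.app f (List.replicate k (numK x))).size = 1 + k * (x + 1) := by
  simp [Tm.size_app, size_numK]

theorem exists_basic_iterRel {k n : ℕ} (hk : 1 ≤ k) (hn : 4 * k ≤ n) :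
    ∃ (s t : Tm SymK) (m : ℕ), IsBasic isDefK s ∧ WFT (arK k) s ∧ s.size ≤ n ∧
      IterRel (IRew (RK k)) m s t ∧ n ^ k ≤ (4 * k) ^ k * (2 * k.factorial) * m := by
  set n' := n / (2 * k)
  have hn' : 1 ≤ n' := (Nat.one_le_div_iff (by omega)).2 (by omega)
  have hlow : n' * (2 * k) ≤ n := Nat.div_mul_le_self n (2 * k)
  have hhigh : n < 2 * k * (n' + 1) := Nat.lt_mul_div_succ n (by omega)
  obtain ⟨m, hm, hrun⟩ := exists_iterRel_numK hk hn'
  refine ⟨_, _, m, ⟨.fk, _, rfl, rfl, fun u hu => ?_⟩, .app _ _ (by simp [arK]) fun u hu => ?_,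
    ?_, hrun, ?_⟩
  · rw [List.eq_of_mem_replicate hu]
    exact isValue_numK n'
  · rw [List.eq_of_mem_replicate hu]
    exact wft_numK k n'
  · rw [size_app_replicate_numK]
    nlinarith
  · calc n ^ k ≤ (4 * k * n') ^ k := Nat.pow_le_pow_left (by nlinarith) k
      _ = (4 * k) ^ k * n' ^ k := mul_pow _ _ _
      _ ≤ (4 * k) ^ k * (2 * k.factorial * m) := Nat.mul_le_mul_left _ hm
      _ = (4 * k) ^ k * (2 * k.factorial) * m := by ring

/-- For every `k ≥ 1`, the TRS `R_k` is compatible with a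
polynomial path order (hence predicative recursive), and there is a positive
rational `c_k` such that for all `n ≥ 1` the term `f_k(sⁿ(0),…,sⁿ(0))` rewrites
to `f_k(0,…,0)` in at least `c_k·n^k` steps; consequently the innermost runtime
complexity of `R_k` is in `Ω(n^k)`. -/
theorem RK_compatible_and_lower_bound (k : ℕ) (hk : 1 ≤ k) :
    (∃ ge : SymK → SymK → Prop,
      Admissible isDefK ge ∧ SafeMap (arK k) isDefK safeK ∧
      ConstructorTRS (arK k) isDefK (RK k) ∧
      ∀ ρ ∈ RK k, GtPop isDefK ge safeK ρ.1 ρ.2) ∧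
    (∃ c : ℚ, 0 < c ∧ ∀ n : ℕ, 1 ≤ n → ∃ m : ℕ,
      c * (n : ℚ) ^ k ≤ (m : ℚ) ∧
      IterRel (Rew (RK k)) m (.app .fk (List.replicate k (numK n)))
        (.app .fk (List.replicate k zeroK))) ∧
    (∃ c' : ℚ, 0 < c' ∧ ∃ N : ℕ, ∀ n : ℕ, N ≤ n →
      ∃ (s t : Tm SymK) (m : ℕ),
        IsBasic isDefK s ∧ WFT (arK k) s ∧ Tm.size s ≤ n ∧
        IterRel (IRew (RK k)) m s t ∧ c' * (n : ℚ) ^ k ≤ (m : ℚ)) := by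
  refine ⟨⟨_, admissible_isDef_eq isDefK, safeMap_safeK k, constructorTRS_RK k, fun ρ hρ => ?_⟩,
    ⟨(2 * k.factorial : ℚ)⁻¹, by positivity, fun n hn => ?_⟩,
    ⟨((4 * k) ^ k * (2 * k.factorial) : ℚ)⁻¹, by positivity, 4 * k, fun n hn => ?_⟩⟩
  · obtain ⟨j, -, rfl⟩ := mem_RK.1 hρ
    exact gtPop_lhsK_rhsK _ (rfl : isDefK .fk = isDefK .fk) k j
  · obtain ⟨m, hm, hrun⟩ := exists_iterRel_numK hk hn
    refine ⟨m, ?_, hrun.mono fun _ _ => IRew.toRew⟩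
    rw [inv_mul_le_iff₀ (by positivity)]
    exact_mod_cast hm
  · obtain ⟨s, t, m, hs, hwft, hsize, hrun, hm⟩ := exists_basic_iterRel hk hn
    refine ⟨s, t, m, hs, hwft, hsize, hrun, ?_⟩
    rw [inv_mul_le_iff₀ (by positivity)]
    exact_mod_cast hm

end PPO
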